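/- arXiv:1412.0399 — 2 statements merged into one kernel-verified Lean document; each statement's English description precedes it below -/
import Mathlib

section
/- Let α be irrational, let R_α be the rotation of S¹ by α, let T : S¹ → ℝ be continuous, and write T^{(n)} = ∑_{k=0}^{n−1} T ∘ R_α^k. Suppose δ > 0 and for every r ∈ (0,δ) there exist x_r ∈ S¹ and m ∈ ℕ with |T^{(m)}(x_r + r) − T^{(m)}(x_r)| > 3δ. Then for every x ∈ S¹ and every r ∈ (0,δ), setting y = x + r, there exists n ∈ ℕ with |T^{(n)}(y) − T^{(n)}(x)| > δ. -/
lemma exists_small_step (α : ℝ) (hα : Irrational α) (η : ℝ) (hη : 0 < η) :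
    ∃ (p : ℕ) (u : ℝ), 0 < u ∧ u < η ∧
      (((u : ℝ) : AddCircle (1 : ℝ)) = p • ((α : ℝ) : AddCircle (1 : ℝ)) ∨
       ((-u : ℝ) : AddCircle (1 : ℝ)) = p • ((α : ℝ) : AddCircle (1 : ℝ))) := by
  have hdense : Dense ((AddSubgroup.closure {α, 1} : AddSubgroup ℝ) : Set ℝ) := by
    rcases AddSubgroup.dense_or_cyclic (AddSubgroup.closure {α, 1}) with h | ⟨a, ha⟩
    · exact h
    · exfalso
      have hmemα : α ∈ AddSubgroup.closure ({α, 1} : Set ℝ) :=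
        AddSubgroup.subset_closure (Set.mem_insert _ _)
      have hmem1 : (1 : ℝ) ∈ AddSubgroup.closure ({α, 1} : Set ℝ) :=
        AddSubgroup.subset_closure (Set.mem_insert_of_mem _ rfl)
      rw [ha, AddSubgroup.mem_closure_singleton] at hmemα hmem1
      obtain ⟨m, hm⟩ := hmemα
      obtain ⟨n, hn⟩ := hmem1
      rw [zsmul_eq_mul] at hm hn
      have hn0 : (n : ℝ) ≠ 0 := by
        intro h; rw [h, zero_mul] at hn; norm_num at hn
      have : α = (m : ℝ) / (n : ℝ) := by
        field_simp
        rw [← hm, mul_comm, ← mul_assoc, mul_comm (n:ℝ) (m:ℝ), mul_assoc, hn, mul_one]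
      exact (hα.ne_rat (m / n)) (by push_cast [this]; norm_num)
  set η' := min η 1 with hη'
  have hη'0 : 0 < η' := lt_min hη one_pos
  obtain ⟨u, hu, huo⟩ := hdense.exists_mem_open isOpen_Ioo
    (Set.nonempty_Ioo.2 (by linarith : (0:ℝ) < η'))
  rw [SetLike.mem_coe, AddSubgroup.mem_closure_pair] at hu
  obtain ⟨k, l, hkl⟩ := hu
  have hu0 : 0 < u := huo.1
  have huη : u < η := lt_of_lt_of_le huo.2 (min_le_left _ _)
  have hcoe : ((u : ℝ) : AddCircle (1 : ℝ)) = k • ((α : ℝ) : AddCircle (1 : ℝ)) := by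
    rw [← hkl, AddCircle.coe_add, AddCircle.coe_zsmul, AddCircle.coe_zsmul]
    norm_num [show ((1:ℝ) : AddCircle (1:ℝ)) = 0 from AddCircle.coe_period 1]
  have hk0 : k ≠ 0 := by
    intro h
    rw [h, zero_zsmul, zero_add, zsmul_eq_mul, mul_one] at hkl
    have hlt : u < 1 := lt_of_lt_of_le huo.2 (min_le_right _ _)
    rw [← hkl] at hu0 hlt
    have h1 : (0:ℤ) < l := by exact_mod_cast hu0
    have h2 : l < 1 := by exact_mod_cast hlt
    omega
  rcases lt_or_gt_of_ne hk0 with hneg | hpos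
  · refine ⟨(-k).toNat, u, hu0, huη, Or.inr ?_⟩
    have h1 : ((-u : ℝ) : AddCircle (1:ℝ)) = (-k) • ((α : ℝ) : AddCircle (1 : ℝ)) := by
      rw [AddCircle.coe_neg, hcoe, neg_zsmul]
    rw [h1, ← natCast_zsmul]
    congr 1
    omega
  · refine ⟨k.toNat, u, hu0, huη, Or.inl ?_⟩
    rw [hcoe, ← natCast_zsmul]
    congr 1
    omega

lemma dense_nat_orbit (α : ℝ) (hα : Irrational α) (y : AddCircle (1 : ℝ)) (η : ℝ) (hη : 0 < η) :
    ∃ n : ℕ, dist (n • ((α : ℝ) : AddCircle (1 : ℝ))) y < η := by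
  haveI : Fact ((0:ℝ) < 1) := ⟨one_pos⟩
  obtain ⟨p, u, hu0, huη, hcase⟩ := exists_small_step α hα η hη
  have key : ∀ s : ℝ, 0 ≤ s → ∃ j : ℕ, |(j : ℝ) * u - s| < η := by
    intro s hs
    refine ⟨⌈s / u⌉₊, ?_⟩
    have h1 : s / u ≤ (⌈s / u⌉₊ : ℝ) := Nat.le_ceil _
    have h2 : (⌈s / u⌉₊ : ℝ) < s / u + 1 := Nat.ceil_lt_add_one (div_nonneg hs hu0.le)
    have h3 : s ≤ (⌈s / u⌉₊ : ℝ) * u := by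
      rw [← div_le_iff₀ hu0]; exact h1
    have h4 : (⌈s / u⌉₊ : ℝ) * u < s + u := by
      have := mul_lt_mul_of_pos_right h2 hu0
      rw [add_mul, div_mul_cancel₀ _ hu0.ne', one_mul] at this
      exact this
    rw [abs_lt]; constructor <;> linarith
  have closelem : ∀ (w : AddCircle (1:ℝ)) (t : ℝ), ((t : ℝ) : AddCircle (1:ℝ)) = w →
      ∀ v : ℝ, |v - t| < η → dist ((v : ℝ) : AddCircle (1:ℝ)) w < η := by
    intro w t hw v hv
    rw [← hw, dist_eq_norm, ← AddCircle.coe_sub]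
    calc ‖((v - t : ℝ) : AddCircle (1:ℝ))‖ ≤ ‖v - t‖ := QuotientAddGroup.norm_mk_le_norm
      _ < η := by rwa [Real.norm_eq_abs]
  rcases hcase with hpos | hneg
  · set s : ℝ := (AddCircle.equivIco (1:ℝ) 0 y : ℝ) with hs
    have hsmem := (AddCircle.equivIco (1:ℝ) 0 y).2
    have hsy : ((s : ℝ) : AddCircle (1:ℝ)) = y := by
      have := (AddCircle.equivIco (1:ℝ) 0).symm_apply_apply y
      exact this
    obtain ⟨j, hj⟩ := key s (by simpa using hsmem.1)
    refine ⟨j * p, ?_⟩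
    have h1 : ((j * p) • ((α : ℝ) : AddCircle (1 : ℝ))) = (((j:ℝ) * u : ℝ) : AddCircle (1:ℝ)) := by
      rw [mul_smul, ← hpos, show ((j:ℝ) * u) = j • u by simp, AddCircle.coe_nsmul]
    rw [h1]
    exact closelem y s hsy _ hj
  · -- step is -u; approximate -y by multiples of u
    set s : ℝ := (AddCircle.equivIco (1:ℝ) 0 (-y) : ℝ) with hs
    have hsmem := (AddCircle.equivIco (1:ℝ) 0 (-y)).2
    have hsy : ((s : ℝ) : AddCircle (1:ℝ)) = -y := by
      have := (AddCircle.equivIco (1:ℝ) 0).symm_apply_apply (-y)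
      exact this
    obtain ⟨j, hj⟩ := key s (by simpa using hsmem.1)
    refine ⟨j * p, ?_⟩
    have h1 : ((j * p) • ((α : ℝ) : AddCircle (1 : ℝ))) = ((-((j:ℝ) * u) : ℝ) : AddCircle (1:ℝ)) := by
      rw [mul_smul, ← hneg, show (-((j:ℝ) * u)) = j • (-u) by simp, AddCircle.coe_nsmul]
    rw [h1]
    have : dist (((j:ℝ) * u : ℝ) : AddCircle (1:ℝ)) (-y) < η := closelem (-y) s hsy _ hj
    rw [AddCircle.coe_neg _, show y = -(-y) from (neg_neg y).symm, dist_neg_neg]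
    exact this

theorem stmt8 (α : ℝ) (hα : Irrational α) (T : AddCircle (1 : ℝ) → ℝ) (hT : Continuous T)
    (δ : ℝ) (hδ : 0 < δ)
    (H : ∀ r ∈ Set.Ioo (0 : ℝ) δ, ∃ (x : AddCircle (1 : ℝ)) (m : ℕ),
      |(∑ k ∈ Finset.range m, T ((x + ((r : ℝ) : AddCircle (1 : ℝ))) +
            k • ((α : ℝ) : AddCircle (1 : ℝ)))) -
          ∑ k ∈ Finset.range m, T (x + k • ((α : ℝ) : AddCircle (1 : ℝ)))| > 3 * δ) :
    ∀ x : AddCircle (1 : ℝ), ∀ r ∈ Set.Ioo (0 : ℝ) δ, ∃ n : ℕ,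
      |(∑ k ∈ Finset.range n, T ((x + ((r : ℝ) : AddCircle (1 : ℝ))) +
            k • ((α : ℝ) : AddCircle (1 : ℝ)))) -
          ∑ k ∈ Finset.range n, T (x + k • ((α : ℝ) : AddCircle (1 : ℝ)))| > δ := by
  intro x r hr
  haveI : Fact ((0:ℝ) < 1) := ⟨one_pos⟩
  obtain ⟨xr, m, hm⟩ := H r hr
  by_contra hcon
  push_neg at hcon
  set a : AddCircle (1:ℝ) := ((α : ℝ) : AddCircle (1:ℝ)) with ha
  set rr : AddCircle (1:ℝ) := ((r : ℝ) : AddCircle (1:ℝ)) with hrr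
  set y : AddCircle (1:ℝ) := x + rr with hy
  let Sm : AddCircle (1:ℝ) → ℝ := fun z => ∑ i ∈ Finset.range m, T (z + i • a)
  have hm' : |Sm (xr + rr) - Sm xr| > 3 * δ := hm
  have hSmc : Continuous Sm :=
    continuous_finset_sum _ fun i _ => hT.comp (continuous_id.add continuous_const)
  have hSmu : UniformContinuous Sm := CompactSpace.uniformContinuous_of_continuous hSmc
  obtain ⟨η, hη0, hη⟩ := Metric.uniformContinuous_iff.mp hSmu (δ/2) (by linarith)
  obtain ⟨k, hk⟩ := dense_nat_orbit α hα (xr - x) η hη0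
  have hk1 : dist (x + k • a) xr < η := by
    rwa [dist_eq_norm, show x + k • a - xr = k • a - (xr - x) by abel, ← dist_eq_norm]
  have hk2 : dist (y + k • a) (xr + rr) < η := by
    rwa [dist_eq_norm, show y + k • a - (xr + rr) = k • a - (xr - x) by rw [hy]; abel,
      ← dist_eq_norm]
  have e1 : |Sm (y + k • a) - Sm (xr + rr)| < δ/2 := by
    have := hη hk2; rwa [Real.dist_eq] at this
  have e2 : |Sm (x + k • a) - Sm xr| < δ/2 := by
    have := hη hk1; rwa [Real.dist_eq] at this
  have key : |Sm (y + k • a) - Sm (x + k • a)| > 2 * δ := by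
    have tri : |Sm (xr + rr) - Sm xr| ≤ |Sm (y + k • a) - Sm (x + k • a)|
        + (|Sm (y + k • a) - Sm (xr + rr)| + |Sm (x + k • a) - Sm xr|) := by
      calc |Sm (xr + rr) - Sm xr|
          = |(Sm (y + k • a) - Sm (x + k • a)) -
              ((Sm (y + k • a) - Sm (xr + rr)) - (Sm (x + k • a) - Sm xr))| := by
            congr 1; ring
        _ ≤ |Sm (y + k • a) - Sm (x + k • a)|
              + |(Sm (y + k • a) - Sm (xr + rr)) - (Sm (x + k • a) - Sm xr)| := abs_sub _ _
        _ ≤ _ := by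
            gcongr
            exact abs_sub _ _
    linarith
  have sumsplit : ∀ z : AddCircle (1:ℝ),
      ∑ i ∈ Finset.range (k + m), T (z + i • a)
        = (∑ i ∈ Finset.range k, T (z + i • a)) + Sm (z + k • a) := by
    intro z
    rw [Finset.sum_range_add]
    congr 1
    apply Finset.sum_congr rfl
    intro i _
    congr 1
    rw [add_nsmul, ← add_assoc]
  have hA := hcon k
  have hB := hcon (k + m)
  rw [sumsplit, sumsplit] at hB
  have habs : |Sm (y + k • a) - Sm (x + k • a)| ≤
      |(∑ i ∈ Finset.range k, T (y + i • a)) + Sm (y + k • a)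
        - ((∑ i ∈ Finset.range k, T (x + i • a)) + Sm (x + k • a))|
      + |(∑ i ∈ Finset.range k, T (y + i • a)) - ∑ i ∈ Finset.range k, T (x + i • a)| := by
    calc |Sm (y + k • a) - Sm (x + k • a)|
        = |((∑ i ∈ Finset.range k, T (y + i • a)) + Sm (y + k • a)
            - ((∑ i ∈ Finset.range k, T (x + i • a)) + Sm (x + k • a)))
          - ((∑ i ∈ Finset.range k, T (y + i • a)) - ∑ i ∈ Finset.range k, T (x + i • a))| := by
          congr 1; ring
      _ ≤ _ := abs_sub _ _
  linarith
end

section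
/- Let a ≥ 10^10, c = (a+√(a²+4))/2, A = (a+√(a²+4))/(2√(a²+4)), α = (−a+√(a²+4))/2, q_n the convergent denominators, and i = ⌊q_{n+1}/2⌋. If S = ∑_{ν=n+2}^∞ T_ν where ‖T_ν‖_∞ ≤ ‖q_ν·α‖, then for all x ∈ S¹: |S^{(i)}(x) − S^{(i)}(0)| ≤ 2·i·∑_{ν=n+2}^∞ ‖q_ν·α‖ < 4·c^{−2}. -/
/-!
The number `α = (-a + √(a² + 4)) / 2` satisfies `α⁻¹ = a + α`, so its continued fraction is
`[0; a, a, a, …]` and the denominators obey `q (m + 2) = a q (m + 1) + q m`. As `-α` is a root of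
`x² = a x + 1`, the sequence `q m • α` on the circle coincides with the geometric solution
`α (-α) ^ m` of the same recurrence, whence `‖q m α‖ ≤ α ^ (m + 1)`; a comparison of the
recurrences gives `q m ≤ c ^ m` with `c = α⁻¹`. The tail `∑_{ν ≥ n+2} ‖q ν α‖` is then at most
`2 α ^ (n + 3)`, it bounds `S` pointwise, and `2 i ≤ q (n + 1) ≤ c ^ (n + 1)` turns the Birkhoff
sum estimate into `2 α² < 4 / c²`.
-/

theorem eq_of_two_step_recurrence {M : Type*} [AddMonoid M] {a : ℕ} {x y : ℕ → M}
    (hx : ∀ m, x (m + 2) = a • x (m + 1) + x m) (hy : ∀ m, y (m + 2) = a • y (m + 1) + y m)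
    (h0 : x 0 = y 0) (h1 : x 1 = y 1) : x = y := by
  funext m
  induction m using Nat.twoStepInduction with
  | zero => exact h0
  | one => exact h1
  | more m ihm ihm1 => rw [hx, hy, ihm, ihm1]

theorem le_of_two_step_recurrence {R : Type*} [Semiring R] [PartialOrder R] [IsOrderedRing R]
    {a : R} (ha : 0 ≤ a) {x y : ℕ → R} (hx : ∀ m, x (m + 2) = a * x (m + 1) + x m)
    (hy : ∀ m, a * y (m + 1) + y m ≤ y (m + 2)) (h0 : x 0 ≤ y 0) (h1 : x 1 ≤ y 1) (m : ℕ) :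
    x m ≤ y m := by
  induction m using Nat.twoStepInduction with
  | zero => exact h0
  | one => exact h1
  | more m ihm ihm1 =>
    rw [hx]
    exact (add_le_add (mul_le_mul_of_nonneg_left ihm1 ha) ihm).trans (hy m)

theorem summable_and_tsum_le_of_le_geometric {f : ℕ → ℝ} {C r : ℝ} (hr0 : 0 ≤ r) (hr1 : r < 1)
    (hf0 : ∀ ν, 0 ≤ f ν) (hf : ∀ ν, f ν ≤ C * r ^ ν) :
    Summable f ∧ ∑' ν, f ν ≤ C / (1 - r) := by
  have hg : HasSum (fun ν ↦ C * r ^ ν) (C * (1 - r)⁻¹) :=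
    (hasSum_geometric_of_lt_one hr0 hr1).mul_left C
  have hfs : Summable f := hg.summable.of_nonneg_of_le hf0 hf
  exact ⟨hfs, (hasSum_le hf hfs.hasSum hg).trans_eq (div_eq_mul_inv C _).symm⟩

theorem abs_sum_range_sub_sum_range_le {f g : ℕ → ℝ} {M : ℝ} (hf : ∀ k, |f k| ≤ M)
    (hg : ∀ k, |g k| ≤ M) (i : ℕ) :
    |∑ k ∈ Finset.range i, f k - ∑ k ∈ Finset.range i, g k| ≤ 2 * i * M := by
  rw [← Finset.sum_sub_distrib]
  calc |∑ k ∈ Finset.range i, (f k - g k)|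
      ≤ ∑ k ∈ Finset.range i, |f k - g k| := Finset.abs_sum_le_sum_abs _ _
    _ ≤ ∑ _k ∈ Finset.range i, 2 * M :=
        Finset.sum_le_sum fun k _ ↦ (abs_sub _ _).trans (by linarith [hf k, hg k])
    _ = 2 * i * M := by rw [Finset.sum_const, Finset.card_range, nsmul_eq_mul]; ring

namespace GenContFract

variable {K : Type*} [DivisionRing K] [LinearOrder K] [IsStrictOrderedRing K] [FloorRing K]
  {v : K}

theorem of_s_get?_of_fract_inv_eq (hv : Int.fract v = v) (hv0 : v ≠ 0)
    (hinv : Int.fract v⁻¹ = v) (m : ℕ) : (GenContFract.of v).s.get? m = some ⟨1, ⌊v⁻¹⌋⟩ := by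
  have hinv_s : ∀ m, (GenContFract.of v⁻¹).s.get? m = some ⟨1, ⌊v⁻¹⌋⟩ := by
    intro m
    induction m with
    | zero => rw [← Stream'.Seq.head, of_s_head (by rwa [hinv]), hinv]
    | succ m ih => rw [of_s_succ, hinv, ih]
  cases m with
  | zero => rw [← Stream'.Seq.head, of_s_head (by rwa [hv]), hv]
  | succ m => rw [of_s_succ, hv, hinv_s]

theorem dens_one_of_fract_inv_eq (hv : Int.fract v = v) (hv0 : v ≠ 0)
    (hinv : Int.fract v⁻¹ = v) : (GenContFract.of v).dens 1 = ⌊v⁻¹⌋ :=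
  first_den_eq (of_s_get?_of_fract_inv_eq hv hv0 hinv 0)

theorem dens_add_two_of_fract_inv_eq (hv : Int.fract v = v) (hv0 : v ≠ 0)
    (hinv : Int.fract v⁻¹ = v) (m : ℕ) :
    (GenContFract.of v).dens (m + 2) =
      ⌊v⁻¹⌋ * (GenContFract.of v).dens (m + 1) + (GenContFract.of v).dens m := by
  rw [dens_recurrence (of_s_get?_of_fract_inv_eq hv hv0 hinv (m + 1)) rfl rfl, one_mul]

end GenContFract

theorem pos_and_mul_add_eq_one_of_eq {a α : ℝ} (hα : α = (-a + √(a ^ 2 + 4)) / 2) :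
    0 < α ∧ α * (a + α) = 1 := by
  have hsq : √(a ^ 2 + 4) ^ 2 = a ^ 2 + 4 := Real.sq_sqrt (by positivity)
  have hlt : a < √(a ^ 2 + 4) := Real.lt_sqrt_of_sq_lt (by linarith)
  subst hα
  exact ⟨by linarith, by linear_combination hsq / 4⟩

section PurelyPeriodic

variable {a : ℕ} {α : ℝ}

theorem floor_inv_and_fract_inv_of_mul_add_eq_one (hα0 : 0 < α) (hα1 : α < 1)
    (hαa : α * (a + α) = 1) : ⌊α⁻¹⌋ = a ∧ Int.fract α⁻¹ = α := by
  have hinv : α⁻¹ = a + α := inv_eq_of_mul_eq_one_right hαa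
  rw [hinv, Int.fract_natCast_add, Int.fract_eq_self.2 ⟨hα0.le, hα1⟩]
  exact ⟨Int.floor_eq_iff.2 ⟨by push_cast; linarith, by push_cast; linarith⟩, rfl⟩

theorem dens_of_mul_add_eq_one (hα0 : 0 < α) (hα1 : α < 1) (hαa : α * (a + α) = 1) :
    (GenContFract.of α).dens 1 = a ∧
      ∀ m, (GenContFract.of α).dens (m + 2) =
        a * (GenContFract.of α).dens (m + 1) + (GenContFract.of α).dens m := by
  obtain ⟨hfloor, hfract⟩ := floor_inv_and_fract_inv_of_mul_add_eq_one hα0 hα1 hαa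
  have hself : Int.fract α = α := Int.fract_eq_self.2 ⟨hα0.le, hα1⟩
  refine ⟨?_, fun m ↦ ?_⟩
  · rw [GenContFract.dens_one_of_fract_inv_eq hself hα0.ne' hfract, hfloor, Int.cast_natCast]
  · rw [GenContFract.dens_add_two_of_fract_inv_eq hself hα0.ne' hfract, hfloor, Int.cast_natCast]

theorem dens_le_inv_pow (hα0 : 0 < α) (hα1 : α < 1) (hαa : α * (a + α) = 1) (m : ℕ) :
    (GenContFract.of α).dens m ≤ α⁻¹ ^ m := by
  obtain ⟨hd1, hd⟩ := dens_of_mul_add_eq_one hα0 hα1 hαa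
  have hinv : α⁻¹ = a + α := inv_eq_of_mul_eq_one_right hαa
  refine le_of_two_step_recurrence (Nat.cast_nonneg a) hd (fun m ↦ le_of_eq ?_) ?_ ?_ m
  · rw [hinv]; linear_combination (-(a + α) ^ m) * hαa
  · rw [GenContFract.zeroth_den_eq_one, pow_zero]
  · rw [hd1, pow_one, hinv]; linarith

theorem coe_dens_mul_eq (hα0 : 0 < α) (hα1 : α < 1) (hαa : α * (a + α) = 1) (m : ℕ) :
    (((GenContFract.of α).dens m * α : ℝ) : AddCircle (1 : ℝ)) = ((α * (-α) ^ m : ℝ) : _) := by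
  obtain ⟨hd1, hd⟩ := dens_of_mul_add_eq_one hα0 hα1 hαa
  refine congrFun (eq_of_two_step_recurrence (a := a)
    (x := fun m ↦ (((GenContFract.of α).dens m * α : ℝ) : AddCircle (1 : ℝ)))
    (y := fun m ↦ ((α * (-α) ^ m : ℝ) : AddCircle (1 : ℝ))) (fun m ↦ ?_) (fun m ↦ ?_) ?_ ?_) m
  · rw [hd, ← AddCircle.coe_nsmul, ← AddCircle.coe_add, nsmul_eq_mul]; congr 1; ring
  · rw [← AddCircle.coe_nsmul, ← AddCircle.coe_add, nsmul_eq_mul]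
    congr 1; linear_combination α * (-α) ^ m * hαa
  · simp [GenContFract.zeroth_den_eq_one]
  · rw [hd1, show (a : ℝ) * α = α * (-α) ^ 1 + 1 by linear_combination hαa,
      AddCircle.coe_add_period]

theorem norm_coe_dens_mul_le (hα0 : 0 < α) (hα1 : α < 1) (hαa : α * (a + α) = 1) (m : ℕ) :
    ‖(((GenContFract.of α).dens m * α : ℝ) : AddCircle (1 : ℝ))‖ ≤ α ^ (m + 1) := by
  rw [coe_dens_mul_eq hα0 hα1 hαa]
  refine QuotientAddGroup.norm_mk_le_norm.trans_eq ?_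
  rw [Real.norm_eq_abs, abs_mul, abs_pow, abs_neg, abs_of_pos hα0, pow_succ']

theorem tsum_norm_coe_dens_mul_le (hα0 : 0 < α) (hα : α ≤ 1 / 2) (hαa : α * (a + α) = 1)
    (n : ℕ) :
    Summable (fun ν ↦ ‖(((GenContFract.of α).dens (n + ν) * α : ℝ) : AddCircle (1 : ℝ))‖) ∧
      ∑' ν, ‖(((GenContFract.of α).dens (n + ν) * α : ℝ) : AddCircle (1 : ℝ))‖ ≤
        2 * α ^ (n + 1) := by
  obtain ⟨hsum, hle⟩ := summable_and_tsum_le_of_le_geometric hα0.le (by linarith)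
    (fun _ ↦ norm_nonneg _) fun ν ↦ (norm_coe_dens_mul_le hα0 (by linarith) hαa (n + ν)).trans_eq
      (by ring : α ^ (n + ν + 1) = α ^ (n + 1) * α ^ ν)
  refine ⟨hsum, hle.trans ?_⟩
  rw [div_le_iff₀ (by linarith)]
  nlinarith [pow_pos hα0 (n + 1)]

end PurelyPeriodic

theorem stmt16_general (a : ℕ) (ha : 10 ^ 10 ≤ a) (α c : ℝ)
    (hα : α = (-(a : ℝ) + Real.sqrt ((a : ℝ) ^ 2 + 4)) / 2)
    (hc : c = ((a : ℝ) + Real.sqrt ((a : ℝ) ^ 2 + 4)) / 2)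
    (q : ℕ → ℕ) (hq : ∀ m, (q m : ℝ) = (GenContFract.of α).dens m)
    (n i : ℕ) (hi : i = q (n + 1) / 2)
    (T : ℕ → AddCircle (1 : ℝ) → ℝ)
    (hT : ∀ ν : ℕ, ∀ x, |T ν x| ≤ ‖(((q ν : ℝ) * α : ℝ) : AddCircle (1 : ℝ))‖)
    (S : AddCircle (1 : ℝ) → ℝ)
    (hS : ∀ x, HasSum (fun ν : ℕ => T (n + 2 + ν) x) (S x)) :
    ∀ x : AddCircle (1 : ℝ),
      |(∑ k ∈ Finset.range i, S (x + k • ((α : ℝ) : AddCircle (1 : ℝ)))) -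
            ∑ k ∈ Finset.range i, S ((0 : AddCircle (1 : ℝ)) + k • ((α : ℝ) : AddCircle (1 : ℝ)))| ≤
          2 * i * ∑' ν : ℕ, ‖(((q (n + 2 + ν) : ℝ) * α : ℝ) : AddCircle (1 : ℝ))‖ ∧
        2 * i * (∑' ν : ℕ, ‖(((q (n + 2 + ν) : ℝ) * α : ℝ) : AddCircle (1 : ℝ))‖) < 4 / c ^ 2 := by
  obtain ⟨hα0, hαa⟩ := pos_and_mul_add_eq_one_of_eq hα
  have ha2 : (2 : ℝ) ≤ a := by exact_mod_cast le_trans (by norm_num) ha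
  have hα_half : α ≤ 1 / 2 := by nlinarith
  have hc_inv : c = α⁻¹ := by rw [inv_eq_of_mul_eq_one_right hαa, hc, hα]; ring
  simp_rw [hq] at hT ⊢
  obtain ⟨hsum, hM⟩ := tsum_norm_coe_dens_mul_le hα0 hα_half hαa (n + 2)
  set M := ∑' ν, ‖(((GenContFract.of α).dens (n + 2 + ν) * α : ℝ) : AddCircle (1 : ℝ))‖
  have hS_le : ∀ y, |S y| ≤ M := fun y ↦ (hS y).norm_le_of_bounded hsum.hasSum fun ν ↦ hT _ y
  have hi_le : 2 * (i : ℝ) ≤ (GenContFract.of α).dens (n + 1) := by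
    rw [← hq]; exact_mod_cast hi ▸ Nat.mul_div_le (q (n + 1)) 2
  intro x
  refine ⟨abs_sum_range_sub_sum_range_le (fun _ ↦ hS_le _) (fun _ ↦ hS_le _) i, ?_⟩
  calc 2 * (i : ℝ) * M ≤ α⁻¹ ^ (n + 1) * (2 * α ^ (n + 2 + 1)) :=
        mul_le_mul (hi_le.trans (dens_le_inv_pow hα0 (by linarith) hαa _)) hM
          (tsum_nonneg fun _ ↦ norm_nonneg _) (by positivity)
    _ = 2 * α ^ 2 * (α⁻¹ * α) ^ (n + 1) := by ring
    _ = 2 * α ^ 2 := by rw [inv_mul_cancel₀ hα0.ne', one_pow, mul_one]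
    _ < 4 / c ^ 2 := by rw [hc_inv, div_eq_mul_inv, inv_pow, inv_inv]; nlinarith [pow_pos hα0 2]

theorem stmt16 (a : ℕ) (ha : 10 ^ 10 ≤ a) (α c A : ℝ)
    (hα : α = (-(a : ℝ) + Real.sqrt ((a : ℝ) ^ 2 + 4)) / 2)
    (hc : c = ((a : ℝ) + Real.sqrt ((a : ℝ) ^ 2 + 4)) / 2)
    (hA : A = ((a : ℝ) + Real.sqrt ((a : ℝ) ^ 2 + 4)) / (2 * Real.sqrt ((a : ℝ) ^ 2 + 4)))
    (q : ℕ → ℕ) (hq : ∀ m, (q m : ℝ) = (GenContFract.of α).dens m)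
    (n i : ℕ) (hi : i = q (n + 1) / 2)
    (T : ℕ → AddCircle (1 : ℝ) → ℝ)
    (hT : ∀ ν : ℕ, ∀ x, |T ν x| ≤ ‖(((q ν : ℝ) * α : ℝ) : AddCircle (1 : ℝ))‖)
    (S : AddCircle (1 : ℝ) → ℝ)
    (hS : ∀ x, HasSum (fun ν : ℕ => T (n + 2 + ν) x) (S x)) :
    ∀ x : AddCircle (1 : ℝ),
      |(∑ k ∈ Finset.range i, S (x + k • ((α : ℝ) : AddCircle (1 : ℝ)))) -
            ∑ k ∈ Finset.range i, S ((0 : AddCircle (1 : ℝ)) + k • ((α : ℝ) : AddCircle (1 : ℝ)))| ≤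
          2 * i * ∑' ν : ℕ, ‖(((q (n + 2 + ν) : ℝ) * α : ℝ) : AddCircle (1 : ℝ))‖ ∧
        2 * i * (∑' ν : ℕ, ‖(((q (n + 2 + ν) : ℝ) * α : ℝ) : AddCircle (1 : ℝ))‖) < 4 / c ^ 2 :=
  stmt16_general a ha α c hα hc q hq n i hi T hT S hS
end
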